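/- arXiv:1005.3290 — 3 statements merged into one kernel-verified Lean document; each statement's English description precedes it below -/
import Mathlib

section
/- Consider on [t₀,T] the linear boundary value problem dz₁/dt = C_ε z₁ + Q_ε p₁ with z₁(T) + p₁(T) = ℓ₁, and dp₁/dt = −C_ε' p₁ + S_ε z₁ with p₁(t₀) = ε Q̃ z₁(t₀), where C_ε, Q_ε, S_ε are continuous matrix-valued functions with Q_ε(t) ≥ 0 and S_ε(t) > 0 for all t, ε > 0, and Q̃ ≥ 0 symmetric. Then for ℓ₁ = 0 the only solution is z₁ ≡ 0, p₁ ≡ 0. -/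
/-!
Along a solution, the pairing `φ t = p₁ t ⬝ᵥ z₁ t` has derivative `z₁ ⬝ᵥ S_ε z₁ + p₁ ⬝ᵥ Q_ε p₁ ≥ 0`,
the `C_ε` terms cancelling because the `p₁`-equation is the adjoint of the `z₁`-equation. The boundary
conditions give `φ t₀ = ε z₁ ⬝ᵥ Q̃ z₁ ≥ 0` and `φ T = -z₁ ⬝ᵥ z₁ ≤ 0`, so `φ` is constant and its
derivative vanishes; positive definiteness of `S_ε` forces `z₁ = 0`. Then `p₁` solves the linear
equation `p₁' = -C_εᵀ p₁` with `p₁ t₀ = 0`, and Grönwall's inequality gives `p₁ = 0`.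
-/

open Matrix Set

theorem HasDerivAt.dotProduct {𝕜 ι : Type*} [NontriviallyNormedField 𝕜] [Fintype ι]
    {f g : 𝕜 → ι → 𝕜} {f' g' : ι → 𝕜} {t : 𝕜} (hf : HasDerivAt f f' t) (hg : HasDerivAt g g' t) :
    HasDerivAt (fun s => f s ⬝ᵥ g s) (f' ⬝ᵥ g t + f t ⬝ᵥ g') t := by
  have := HasDerivAt.fun_sum (u := Finset.univ) fun i _ =>
    (hasDerivAt_pi.mp hf i).fun_mul (hasDerivAt_pi.mp hg i)
  simpa only [_root_.dotProduct, Finset.sum_add_distrib] using this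

theorem hasDerivAt_dotProduct_of_hamiltonian {n : Type*} [Fintype n] {C Q S : Matrix n n ℝ}
    {z p : ℝ → n → ℝ} {t : ℝ} (hz : HasDerivAt z (C *ᵥ z t + Q *ᵥ p t) t)
    (hp : HasDerivAt p (-(Cᵀ *ᵥ p t) + S *ᵥ z t) t) :
    HasDerivAt (fun s => p s ⬝ᵥ z s) (z t ⬝ᵥ S *ᵥ z t + p t ⬝ᵥ Q *ᵥ p t) t := by
  refine (hp.dotProduct hz).congr_deriv ?_
  rw [add_dotProduct, neg_dotProduct, dotProduct_add, mulVec_transpose, ← dotProduct_mulVec,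
    dotProduct_comm (S *ᵥ z t)]
  ring

theorem Matrix.PosDef.eq_zero_of_dotProduct_mulVec_eq_zero {n : Type*} [Fintype n] {M : Matrix n n ℝ}
    (hM : M.PosDef) {v : n → ℝ} (hv : v ⬝ᵥ M *ᵥ v = 0) : v = 0 := by
  by_contra hne
  simpa [hv] using hM.dotProduct_mulVec_pos hne

theorem eq_zero_of_hasDerivAt_of_nonneg_of_le {φ g : ℝ → ℝ} {a b : ℝ} (hab : a < b)
    (hφ : ∀ t ∈ Icc a b, HasDerivAt φ (g t) t) (hg : ∀ t ∈ Icc a b, 0 ≤ g t)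
    (hφab : φ b ≤ φ a) : ∀ t ∈ Icc a b, g t = 0 := by
  have hmono : MonotoneOn φ (Icc a b) :=
    monotoneOn_of_hasDerivWithinAt_nonneg (convex_Icc a b)
      (fun t ht => (hφ t ht).continuousAt.continuousWithinAt)
      (fun t ht => (hφ t (interior_subset ht)).hasDerivWithinAt)
      (fun t ht => hg t (interior_subset ht))
  have ha : a ∈ Icc a b := left_mem_Icc.mpr hab.le
  have hb : b ∈ Icc a b := right_mem_Icc.mpr hab.le
  have hconst : ∀ t ∈ Icc a b, φ t = φ a := fun t ht =>
    le_antisymm ((hmono ht hb ht.2).trans hφab) (hmono ha ht ht.1)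
  intro t ht
  have hφ_const : HasDerivWithinAt φ 0 (Icc a b) t :=
    (hasDerivWithinAt_const t _ (φ a)).congr hconst (hconst t ht)
  exact (uniqueDiffOn_Icc hab t ht).eq_deriv _ (hφ t ht).hasDerivWithinAt hφ_const

theorem eq_zero_of_hasDerivAt_mulVec_of_eq_zero {n : Type*} [Fintype n] {A : ℝ → Matrix n n ℝ}
    {f : ℝ → n → ℝ} {a b : ℝ} (hA : ContinuousOn A (Icc a b))
    (hf : ∀ t ∈ Icc a b, HasDerivAt f (A t *ᵥ f t) t) (ha : f a = 0) :
    ∀ t ∈ Icc a b, f t = 0 := by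
  let := Matrix.linftyOpNormedAddCommGroup (m := n) (n := n) (α := ℝ)
  obtain ⟨K, hK⟩ := isCompact_Icc.exists_bound_of_continuousOn hA
  exact eq_zero_of_abs_deriv_le_mul_abs_self_of_eq_zero_right
    (fun t ht => (hf t ht).continuousAt.continuousWithinAt)
    (fun t ht => (hf t (Ico_subset_Icc_self ht)).hasDerivWithinAt) ha
    (fun t ht => (linfty_opNorm_mulVec _ _).trans <|
      mul_le_mul_of_nonneg_right (hK t (Ico_subset_Icc_self ht)) (norm_nonneg _))

theorem stmt4_general {r : ℕ} (t₀ T : ℝ) (hT : t₀ < T) (ε : ℝ) (hε : 0 < ε)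
    (Cε Qε Sε : ℝ → Matrix (Fin r) (Fin r) ℝ)
    (hCc : ContinuousOn Cε (Set.Icc t₀ T))
    (hQpsd : ∀ t ∈ Set.Icc t₀ T, (Qε t).PosSemidef)
    (hSpd : ∀ t ∈ Set.Icc t₀ T, (Sε t).PosDef)
    (Qt : Matrix (Fin r) (Fin r) ℝ) (hQt : Qt.PosSemidef)
    (z₁ p₁ : ℝ → Fin r → ℝ)
    (hz : ∀ t ∈ Set.Icc t₀ T,
      HasDerivAt z₁ ((Cε t).mulVec (z₁ t) + (Qε t).mulVec (p₁ t)) t)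
    (hp : ∀ t ∈ Set.Icc t₀ T,
      HasDerivAt p₁ (-((Cε t)ᵀ.mulVec (p₁ t)) + (Sε t).mulVec (z₁ t)) t)
    (hbT : z₁ T + p₁ T = 0)
    (hb0 : p₁ t₀ = ε • Qt.mulVec (z₁ t₀)) :
    ∀ t ∈ Set.Icc t₀ T, z₁ t = 0 ∧ p₁ t = 0 := by
  have hS_nonneg t (ht : t ∈ Icc t₀ T) : 0 ≤ z₁ t ⬝ᵥ Sε t *ᵥ z₁ t := by
    simpa using (hSpd t ht).posSemidef.dotProduct_mulVec_nonneg (z₁ t)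
  have hQ_nonneg t (ht : t ∈ Icc t₀ T) : 0 ≤ p₁ t ⬝ᵥ Qε t *ᵥ p₁ t := by
    simpa using (hQpsd t ht).dotProduct_mulVec_nonneg (p₁ t)
  have hφ_ends : p₁ T ⬝ᵥ z₁ T ≤ p₁ t₀ ⬝ᵥ z₁ t₀ := by
    have hT_nonpos : p₁ T ⬝ᵥ z₁ T ≤ 0 := by
      rw [eq_neg_of_add_eq_zero_right hbT, neg_dotProduct, neg_nonpos]
      exact dotProduct_self_star_nonneg (z₁ T)
    have ht₀_nonneg : 0 ≤ p₁ t₀ ⬝ᵥ z₁ t₀ := by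
      rw [hb0, smul_dotProduct, dotProduct_comm]
      exact smul_nonneg hε.le (by simpa using hQt.dotProduct_mulVec_nonneg (z₁ t₀))
    linarith
  have hφ_deriv := eq_zero_of_hasDerivAt_of_nonneg_of_le hT
    (fun t ht => hasDerivAt_dotProduct_of_hamiltonian (hz t ht) (hp t ht))
    (fun t ht => add_nonneg (hS_nonneg t ht) (hQ_nonneg t ht)) hφ_ends
  have hz₁ t (ht : t ∈ Icc t₀ T) : z₁ t = 0 := by
    refine (hSpd t ht).eq_zero_of_dotProduct_mulVec_eq_zero ?_
    linarith [hφ_deriv t ht, hS_nonneg t ht, hQ_nonneg t ht]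
  have hp₁ : ∀ t ∈ Icc t₀ T, p₁ t = 0 := by
    have hA : ContinuousOn (fun t => -(Cε t)ᵀ) (Icc t₀ T) :=
      (continuous_neg.comp continuous_id.matrix_transpose).comp_continuousOn hCc
    refine eq_zero_of_hasDerivAt_mulVec_of_eq_zero hA (fun t ht => ?_) ?_
    · simpa [hz₁ t ht, neg_mulVec] using hp t ht
    · simp [hb0, hz₁ t₀ (left_mem_Icc.mpr hT.le)]
  exact fun t ht => ⟨hz₁ t ht, hp₁ t ht⟩

/-- uniqueness for the homogeneous two-point boundary value problem
`dz₁/dt = C_ε z₁ + Q_ε p₁`, `dp₁/dt = −C_ε' p₁ + S_ε z₁`, `z₁(T)+p₁(T)=0`,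
`p₁(t₀) = ε Q̃ z₁(t₀)`: the only solution is `z₁ ≡ 0`, `p₁ ≡ 0`. -/
theorem stmt4 {r : ℕ} (t₀ T : ℝ) (hT : t₀ < T) (ε : ℝ) (hε : 0 < ε)
    (Cε Qε Sε : ℝ → Matrix (Fin r) (Fin r) ℝ)
    (hCc : ContinuousOn Cε (Set.Icc t₀ T))
    (hQc : ContinuousOn Qε (Set.Icc t₀ T))
    (hSc : ContinuousOn Sε (Set.Icc t₀ T))
    (hQpsd : ∀ t ∈ Set.Icc t₀ T, (Qε t).PosSemidef)
    (hSpd : ∀ t ∈ Set.Icc t₀ T, (Sε t).PosDef)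
    (Qt : Matrix (Fin r) (Fin r) ℝ) (hQt : Qt.PosSemidef)
    (z₁ p₁ : ℝ → Fin r → ℝ)
    (hz : ∀ t ∈ Set.Icc t₀ T,
      HasDerivAt z₁ ((Cε t).mulVec (z₁ t) + (Qε t).mulVec (p₁ t)) t)
    (hp : ∀ t ∈ Set.Icc t₀ T,
      HasDerivAt p₁ (-((Cε t)ᵀ.mulVec (p₁ t)) + (Sε t).mulVec (z₁ t)) t)
    (hbT : z₁ T + p₁ T = 0)
    (hb0 : p₁ t₀ = ε • Qt.mulVec (z₁ t₀)) :
    ∀ t ∈ Set.Icc t₀ T, z₁ t = 0 ∧ p₁ t = 0 :=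
  stmt4_general t₀ T hT ε hε Cε Qε Sε hCc hQpsd hSpd Qt hQt z₁ p₁ hz hp hbT hb0
end

section
/- Let A ∈ ℝ^{r×k}, and let S₁ + C₃'Q₄⁻¹C₃ ∈ ℝ^{r×r} be symmetric, where Q₄ > 0 and the block matrix [[S₁,S₂],[S₂',S₄]] = H'RH is positive semidefinite and A = C₃'Q₄⁻¹C₄ + S₂, W(ε) = εI + S₄ + C₄'Q₄⁻¹C₄, M(ε) = W(ε)⁻¹. Then Q_ε := −(1/ε) A M(ε) A' + I_r + (1/ε)[S₁ + C₃'Q₄⁻¹C₃] is symmetric positive semidefinite for every ε > 0. -/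
/-!
`Q_ε` is `1/ε` times the Schur complement of `W(ε)` in the block matrix
`H'RH + [C₃ C₄]' Q₄⁻¹ [C₃ C₄] + ε I`. That matrix is positive semidefinite as a sum of
positive semidefinite ones, and its lower-right block `W(ε)` is positive definite, so the
Schur complement is positive semidefinite.
-/

open Matrix

namespace Matrix

variable {m n o R : Type*}

theorem PosSemidef.of_fromBlocks₂₂ [Fintype m] [Fintype n] [CommRing R] [PartialOrder R]
    [StarRing R] {A : Matrix m m R} {B : Matrix m n R} {C : Matrix n m R} {D : Matrix n n R}
    (h : (fromBlocks A B C D).PosSemidef) : D.PosSemidef := by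
  rw [← toBlocks_fromBlocks₂₂ A B C D]
  exact h.submatrix Sum.inr

theorem transpose_fromCols_mul_mul_fromCols [Fintype o] [CommRing R] (P : Matrix o o R)
    (C : Matrix o m R) (D : Matrix o n R) :
    (fromCols C D)ᵀ * P * fromCols C D =
      fromBlocks (Cᵀ * P * C) (Cᵀ * P * D) (Dᵀ * P * C) (Dᵀ * P * D) := by
  rw [transpose_fromCols, fromRows_mul, fromRows_mul_fromCols]

theorem PosSemidef.transpose_mul_mul_same [Fintype m] [Fintype n] {P : Matrix m m ℝ}
    (hP : P.PosSemidef) (C : Matrix m n ℝ) : (Cᵀ * P * C).PosSemidef := by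
  simpa using hP.conjTranspose_mul_mul_same C

variable [Fintype m] [Fintype n] [Fintype o] [DecidableEq m] [DecidableEq n] {ε : ℝ}
  {S₁ : Matrix m m ℝ} {S₂ : Matrix m n ℝ} {S₄ : Matrix n n ℝ} {P : Matrix o o ℝ}

theorem PosSemidef.fromBlocks_add_transpose_mul_mul_add_smul_one (hε : 0 ≤ ε)
    (hS : (fromBlocks S₁ S₂ S₂ᵀ S₄).PosSemidef) (hP : P.PosSemidef)
    (C : Matrix o m ℝ) (D : Matrix o n ℝ) :
    (fromBlocks (ε • 1 + (S₁ + Cᵀ * P * C)) (Cᵀ * P * D + S₂) (Cᵀ * P * D + S₂)ᵀ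
      (ε • 1 + S₄ + Dᵀ * P * D)).PosSemidef := by
  have hPT : Pᵀ = P := (by simpa using hP.1 : P.IsSymm).eq
  have hsplit : fromBlocks (ε • 1 + (S₁ + Cᵀ * P * C)) (Cᵀ * P * D + S₂)
      (Cᵀ * P * D + S₂)ᵀ (ε • 1 + S₄ + Dᵀ * P * D) =
      fromBlocks S₁ S₂ S₂ᵀ S₄ + (fromCols C D)ᵀ * P * fromCols C D + ε • 1 := by
    rw [transpose_fromCols_mul_mul_fromCols, ← fromBlocks_one, fromBlocks_smul, fromBlocks_add,
      fromBlocks_add, transpose_add, transpose_mul, transpose_mul, transpose_transpose, hPT,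
      ← Matrix.mul_assoc]
    simp only [smul_zero, add_zero]
    congr 1 <;> abel
  rw [hsplit]
  exact (hS.add (hP.transpose_mul_mul_same _)).add (PosSemidef.one.smul hε)

end Matrix

theorem stmt14_general {r k s : ℕ} (ε : ℝ) (hε : 0 < ε)
    (S₁ : Matrix (Fin r) (Fin r) ℝ) (S₂ : Matrix (Fin r) (Fin k) ℝ)
    (S₄ : Matrix (Fin k) (Fin k) ℝ)
    (hS : (Matrix.fromBlocks S₁ S₂ S₂ᵀ S₄).PosSemidef)
    (Q₄ : Matrix (Fin s) (Fin s) ℝ) (hQ₄ : Q₄.PosDef)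
    (C₃ : Matrix (Fin s) (Fin r) ℝ) (C₄ : Matrix (Fin s) (Fin k) ℝ) :
    (-((1 / ε) • ((C₃ᵀ * Q₄⁻¹ * C₄ + S₂) *
        (ε • (1 : Matrix (Fin k) (Fin k) ℝ) + S₄ + C₄ᵀ * Q₄⁻¹ * C₄)⁻¹ *
        (C₃ᵀ * Q₄⁻¹ * C₄ + S₂)ᵀ)) +
      (1 : Matrix (Fin r) (Fin r) ℝ) +
      (1 / ε) • (S₁ + C₃ᵀ * Q₄⁻¹ * C₃)).PosSemidef := by
  set T := S₁ + C₃ᵀ * Q₄⁻¹ * C₃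
  set A := C₃ᵀ * Q₄⁻¹ * C₄ + S₂
  set W := ε • (1 : Matrix (Fin k) (Fin k) ℝ) + S₄ + C₄ᵀ * Q₄⁻¹ * C₄
  have hP : Q₄⁻¹.PosSemidef := hQ₄.inv.posSemidef
  have hW : W.PosDef :=
    ((PosDef.one.smul hε).add_posSemidef hS.of_fromBlocks₂₂).add_posSemidef
      (hP.transpose_mul_mul_same C₄)
  have := hW.isUnit.invertible
  have hSchur : (ε • 1 + T - A * W⁻¹ * Aᵀ).PosSemidef := by
    simpa only [conjTranspose_eq_transpose_of_trivial] using (PosDef.fromBlocks₂₂ _ _ hW).mp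
      (hS.fromBlocks_add_transpose_mul_mul_add_smul_one hε.le hP C₃ C₄)
  have hscale : -((1 / ε) • (A * W⁻¹ * Aᵀ)) + 1 + (1 / ε) • T =
      (1 / ε) • (ε • 1 + T - A * W⁻¹ * Aᵀ) := by
    rw [smul_sub, smul_add (1 / ε) (ε • 1) T, smul_smul, one_div, inv_mul_cancel₀ hε.ne',
      one_smul]
    abel
  rw [hscale]
  exact hSchur.smul (by positivity)

/-- with `A = C₃'Q₄⁻¹C₄ + S₂`, `W(ε) = εI + S₄ + C₄'Q₄⁻¹C₄`,
`M(ε) = W(ε)⁻¹`, the matrix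
`Q_ε = −(1/ε) A M(ε) A' + I + (1/ε)(S₁ + C₃'Q₄⁻¹C₃)` is symmetric positive
semidefinite for every `ε > 0`, where `[[S₁,S₂],[S₂',S₄]]` is positive semidefinite
and `Q₄` is positive definite. -/
theorem stmt14 {r k s : ℕ} (ε : ℝ) (hε : 0 < ε)
    (S₁ : Matrix (Fin r) (Fin r) ℝ) (S₂ : Matrix (Fin r) (Fin k) ℝ)
    (S₄ : Matrix (Fin k) (Fin k) ℝ)
    (hS : (Matrix.fromBlocks S₁ S₂ S₂ᵀ S₄).PosSemidef)
    (Q₄ : Matrix (Fin s) (Fin s) ℝ) (hQ₄ : Q₄.PosDef)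
    (C₃ : Matrix (Fin s) (Fin r) ℝ) (C₄ : Matrix (Fin s) (Fin k) ℝ)
    (hsym : (S₁ + C₃ᵀ * Q₄⁻¹ * C₃)ᵀ = S₁ + C₃ᵀ * Q₄⁻¹ * C₃) :
    (-((1 / ε) • ((C₃ᵀ * Q₄⁻¹ * C₄ + S₂) *
        (ε • (1 : Matrix (Fin k) (Fin k) ℝ) + S₄ + C₄ᵀ * Q₄⁻¹ * C₄)⁻¹ *
        (C₃ᵀ * Q₄⁻¹ * C₄ + S₂)ᵀ)) +
      (1 : Matrix (Fin r) (Fin r) ℝ) +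
      (1 / ε) • (S₁ + C₃ᵀ * Q₄⁻¹ * C₃)).PosSemidef :=
  stmt14_general ε hε S₁ S₂ S₄ hS Q₄ hQ₄ C₃ C₄
end

section
/- Suppose sequences u_n → u and z_n → z weakly in L²(t₀,T), with F'z_n ∈ H¹ for all n and sup_n ‖d(F'z_n)/dt + C'z_n − H'u_n‖_{L²} < ∞. Then F'z ∈ H¹ (the distributional derivative d(F'z)/dt is in L²), the derivatives d(F'z_n)/dt converge weakly in L² to d(F'z)/dt, and F'z_n(t₀) → F'z(t₀) in ℝⁿ provided F'z_n(T) → F'z(T) in ℝⁿ. -/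
/-!
Write `P f x = ∫ t in t₀..x, f t`. For a mean-zero `c ∈ L²` the primitive `P c` vanishes at both
ends, so integration by parts gives `∫ ζₖ · P c = -∫ (F'zₖ) · c`, which converges. These
primitives span a dense subspace of `L²`: a function orthogonal to all of them has a primitive
orthogonal to every mean-zero function, hence constant, hence zero. Since
`ζₖ = gₖ - C'zₖ + H'uₖ` with `gₖ` bounded by hypothesis and the other two terms weakly
convergent, hence bounded by Banach–Steinhaus, the sequence `ζₖ` is bounded and therefore
converges weakly to some `ζ`. Passing to the limit in the same identity shows that
`P ζ - F'z` is orthogonal to all mean-zero functions, i.e. constant; this constant plus `P ζ`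
is `φ`. Finally `F'zₖ(t₀) = F'zₖ(T) - ∫ ζₖ`, and `∫ ζₖ → ∫ ζ`.
-/

open Matrix MeasureTheory Filter Set
open scoped Topology InnerProductSpace ENNReal

section Hilbert

variable {E : Type*} [NormedAddCommGroup E] [InnerProductSpace ℝ E]

theorem exists_norm_le_of_forall_tendsto_inner [CompleteSpace E] {Z : ℕ → E}
    (h : ∀ V, ∃ L, Tendsto (fun k => ⟪Z k, V⟫_ℝ) atTop (𝓝 L)) : ∃ M, ∀ k, ‖Z k‖ ≤ M := by
  obtain ⟨M, hM⟩ := banach_steinhaus (g := fun k => innerSL ℝ (Z k)) fun V => by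
    obtain ⟨L, hL⟩ := h V
    obtain ⟨C, hC⟩ := hL.norm.bddAbove_range
    exact ⟨C, fun k => hC ⟨k, rfl⟩⟩
  exact ⟨M, fun k => by simpa using hM k⟩

theorem exists_tendsto_inner_of_mem_span {Z : ℕ → E} {S : Set E}
    (h : ∀ V ∈ S, ∃ L, Tendsto (fun k => ⟪Z k, V⟫_ℝ) atTop (𝓝 L)) {V : E}
    (hV : V ∈ Submodule.span ℝ S) : ∃ L, Tendsto (fun k => ⟪Z k, V⟫_ℝ) atTop (𝓝 L) := by
  induction hV using Submodule.span_induction with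
  | mem V hV => exact h V hV
  | zero => exact ⟨0, by simp⟩
  | add V W _ _ hV hW =>
    obtain ⟨L, hL⟩ := hV
    obtain ⟨L', hL'⟩ := hW
    exact ⟨L + L', by simpa [inner_add_right] using hL.add hL'⟩
  | smul a V _ hV =>
    obtain ⟨L, hL⟩ := hV
    exact ⟨a * L, by simpa [real_inner_smul_right] using hL.const_mul a⟩

theorem cauchySeq_inner_of_dense {Z : ℕ → E} {M : ℝ} (hM : ∀ k, ‖Z k‖ ≤ M) {S : Set E}
    (hS : Dense S) (h : ∀ V ∈ S, CauchySeq fun k => ⟪Z k, V⟫_ℝ) (V : E) :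
    CauchySeq fun k => ⟪Z k, V⟫_ℝ := by
  -- Cauchy-ness is convergence to `0` of an equicontinuous family of functions of `V`,
  -- and the set where such a family converges is closed.
  have hequi : Equicontinuous fun (p : ℕ × ℕ) (V : E) => ⟪Z p.1 - Z p.2, V⟫_ℝ :=
    ((NormedSpace.equicontinuous_TFAE fun p : ℕ × ℕ => innerSL ℝ (Z p.1 - Z p.2)).out 5 1).mp
      (⟨M + M, fun p => by
        rw [innerSL_apply_norm]; exact (norm_sub_le _ _).trans (add_le_add (hM p.1) (hM p.2))⟩ :
        ∃ C, ∀ p : ℕ × ℕ, ‖innerSL ℝ (Z p.1 - Z p.2)‖ ≤ C)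
  have hcauchy_iff : ∀ V, CauchySeq (fun k => ⟪Z k, V⟫_ℝ) ↔
      Tendsto (fun p : ℕ × ℕ => ⟪Z p.1 - Z p.2, V⟫_ℝ) atTop (𝓝 0) := by
    intro V
    rw [cauchySeq_iff_tendsto_dist_atTop_0,
      tendsto_zero_iff_abs_tendsto_zero fun p : ℕ × ℕ => ⟪Z p.1 - Z p.2, V⟫_ℝ]
    simp [Function.comp_def, Real.dist_eq, inner_sub_left]
  exact (hcauchy_iff V).mpr
    ((hequi.isClosed_setOfPred_tendsto continuous_const).closure_subset_iff.mpr
      (fun W hW => (hcauchy_iff W).mp (h W hW)) (hS.closure_eq ▸ mem_univ V))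

theorem exists_tendsto_inner_of_dense_span [CompleteSpace E] {Z : ℕ → E} {M : ℝ}
    (hM : ∀ k, ‖Z k‖ ≤ M) {S : Set E} (hS : Dense (Submodule.span ℝ S : Set E))
    (h : ∀ V ∈ S, ∃ L, Tendsto (fun k => ⟪Z k, V⟫_ℝ) atTop (𝓝 L)) :
    ∃ Z' : E, ∀ V, Tendsto (fun k => ⟪Z k, V⟫_ℝ) atTop (𝓝 ⟪Z', V⟫_ℝ) := by
  have hcauchy := cauchySeq_inner_of_dense hM hS fun V hV =>
    (exists_tendsto_inner_of_mem_span h hV).choose_spec.cauchySeq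
  choose Λ hΛ using fun V => cauchySeq_tendsto_of_complete (hcauchy V)
  let Λc : E →L[ℝ] ℝ :=
    continuousLinearMapOfTendsto (fun k => innerSL ℝ (Z k)) (tendsto_pi_nhds.mpr hΛ)
  refine ⟨(InnerProductSpace.toDual ℝ E).symm Λc, fun V => ?_⟩
  rw [InnerProductSpace.toDual_symm_apply]
  exact hΛ V

end Hilbert

section ScalarL2

variable {α : Type*} [MeasurableSpace α] {μ : Measure α}

theorem MeasureTheory.MemLp.integrable_fun_mul {f g : α → ℝ} (hf : MemLp f 2 μ)
    (hg : MemLp g 2 μ) : Integrable (fun t => f t * g t) μ :=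
  hf.integrable_mul hg

theorem MeasureTheory.MemLp.inner_toLp_eq_integral_mul {f : α → ℝ} (hf : MemLp f 2 μ)
    (V : Lp ℝ 2 μ) : ⟪hf.toLp f, V⟫_ℝ = ∫ t, f t * V t ∂μ := by
  rw [L2.inner_def]
  refine integral_congr_ae ?_
  filter_upwards [hf.coeFn_toLp] with t ht
  simp [ht, mul_comm]

theorem MeasureTheory.MemLp.inner_toLp_toLp {f g : α → ℝ} (hf : MemLp f 2 μ)
    (hg : MemLp g 2 μ) : ⟪hf.toLp f, hg.toLp g⟫_ℝ = ∫ t, f t * g t ∂μ := by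
  rw [hf.inner_toLp_eq_integral_mul]
  refine integral_congr_ae ?_
  filter_upwards [hg.coeFn_toLp] with t ht
  rw [ht]

theorem ae_eq_const_of_forall_integral_mul_eq_zero [IsFiniteMeasure μ] {D : α → ℝ}
    (hD : MemLp D 2 μ) (h : ∀ c, MemLp c 2 μ → ∫ t, c t ∂μ = 0 → ∫ t, D t * c t ∂μ = 0) :
    ∃ a : ℝ, ∀ᵐ t ∂μ, D t = a := by
  set one : Lp ℝ 2 μ := indicatorConstLp 2 MeasurableSet.univ (measure_ne_top μ univ) 1
  have hmem : hD.toLp D ∈ (ℝ ∙ one)ᗮᗮ := by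
    rw [Submodule.mem_orthogonal]
    intro c hc
    rw [Submodule.mem_orthogonal_singleton_iff_inner_right, L2.inner_indicatorConstLp_one,
      Measure.restrict_univ] at hc
    rw [real_inner_comm, hD.inner_toLp_eq_integral_mul]
    exact h c (Lp.memLp c) hc
  rw [Submodule.orthogonal_orthogonal, Submodule.mem_span_singleton] at hmem
  obtain ⟨a, ha⟩ := hmem
  refine ⟨a, ?_⟩
  filter_upwards [hD.coeFn_toLp, Lp.coeFn_smul a one, indicatorConstLp_coeFn (p := 2)
    (hs := MeasurableSet.univ) (hμs := measure_ne_top μ univ) (c := (1 : ℝ))] with t h1 h2 h3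
  rw [← h1, ← ha, h2, Pi.smul_apply, h3]
  simp

end ScalarL2

section VectorL2

variable {α ι : Type*} [MeasurableSpace α] {μ : Measure α} [Fintype ι]

def TendstoWeaklyInL2 (μ : Measure α) (f : ℕ → α → ι → ℝ) (g : α → ι → ℝ) : Prop :=
  ∀ v : α → ι → ℝ, MemLp v 2 μ →
    Tendsto (fun k => ∫ t, f k t ⬝ᵥ v t ∂μ) atTop (𝓝 (∫ t, g t ⬝ᵥ v t ∂μ))

def BoundedInL2 (μ : Measure α) (f : ℕ → α → ι → ℝ) : Prop :=
  ∃ M, ∀ k, ∫ t, f k t ⬝ᵥ f k t ∂μ ≤ M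

theorem MeasureTheory.MemLp.integrable_dotProduct {f g : α → ι → ℝ} (hf : MemLp f 2 μ)
    (hg : MemLp g 2 μ) : Integrable (fun t => f t ⬝ᵥ g t) μ :=
  integrable_finsetSum _ fun j _ => (hf.eval j).integrable_fun_mul (hg.eval j)

theorem MeasureTheory.MemLp.integral_dotProduct_self {f : α → ι → ℝ} (hf : MemLp f 2 μ) :
    ∫ t, f t ⬝ᵥ f t ∂μ = ∑ j, ‖(hf.eval j).toLp‖ ^ 2 := by
  simp only [dotProduct]
  rw [integral_finsetSum _ fun j _ => (hf.eval j).integrable_fun_mul (hf.eval j)]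
  simp only [← real_inner_self_eq_norm_sq, MemLp.inner_toLp_toLp]

theorem MeasureTheory.MemLp.mulVec {κ : Type*} [Fintype κ] {A : α → Matrix ι κ ℝ}
    (hA : ∀ i j, MemLp (fun t => A t i j) ∞ μ) {v : α → κ → ℝ} (hv : MemLp v 2 μ) :
    MemLp (fun t => A t *ᵥ v t) 2 μ :=
  MemLp.of_eval fun i => memLp_finsetSum _ fun j _ => (hv.eval j).mul' (hA i j)

theorem dotProduct_self_sub_add_le (x y z : ι → ℝ) :
    (x - y + z) ⬝ᵥ (x - y + z) ≤ 3 * (x ⬝ᵥ x + y ⬝ᵥ y + z ⬝ᵥ z) := by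
  simp only [dotProduct, Finset.mul_sum, ← Finset.sum_add_distrib]
  refine Finset.sum_le_sum fun i _ => ?_
  simp only [Pi.add_apply, Pi.sub_apply]
  nlinarith [sq_nonneg (x i + y i), sq_nonneg (x i - z i), sq_nonneg (y i + z i)]

namespace BoundedInL2

variable {f g h : ℕ → α → ι → ℝ}

theorem sub_add (hf : BoundedInL2 μ f) (hg : BoundedInL2 μ g) (hh : BoundedInL2 μ h)
    (hf₂ : ∀ k, MemLp (f k) 2 μ) (hg₂ : ∀ k, MemLp (g k) 2 μ) (hh₂ : ∀ k, MemLp (h k) 2 μ) :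
    BoundedInL2 μ fun k t => f k t - g k t + h k t := by
  obtain ⟨Mf, hMf⟩ := hf
  obtain ⟨Mg, hMg⟩ := hg
  obtain ⟨Mh, hMh⟩ := hh
  refine ⟨3 * (Mf + Mg + Mh), fun k => ?_⟩
  have hi : ∀ {w : α → ι → ℝ}, MemLp w 2 μ → Integrable (fun t => w t ⬝ᵥ w t) μ :=
    fun hw => hw.integrable_dotProduct hw
  calc ∫ t, (f k t - g k t + h k t) ⬝ᵥ (f k t - g k t + h k t) ∂μ
      ≤ ∫ t, 3 * (f k t ⬝ᵥ f k t + g k t ⬝ᵥ g k t + h k t ⬝ᵥ h k t) ∂μ :=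
        integral_mono (hi (((hf₂ k).sub (hg₂ k)).add (hh₂ k)))
          ((((hi (hf₂ k)).add (hi (hg₂ k))).add (hi (hh₂ k))).const_mul 3)
          fun t => dotProduct_self_sub_add_le _ _ _
    _ = 3 * (∫ t, f k t ⬝ᵥ f k t ∂μ + ∫ t, g k t ⬝ᵥ g k t ∂μ + ∫ t, h k t ⬝ᵥ h k t ∂μ) := by
        rw [integral_const_mul, integral_add ?_ (hi (hh₂ k)),
          integral_add (hi (hf₂ k)) (hi (hg₂ k))]
        exact (hi (hf₂ k)).add (hi (hg₂ k))
    _ ≤ 3 * (Mf + Mg + Mh) := by gcongr <;> simp only [hMf, hMg, hMh]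

theorem norm_toLp_eval_le (hf : BoundedInL2 μ f) (hf₂ : ∀ k, MemLp (f k) 2 μ) (j : ι) :
    ∃ M, ∀ k, ‖((hf₂ k).eval j).toLp‖ ≤ M := by
  obtain ⟨M, hM⟩ := hf
  refine ⟨√M, fun k => Real.le_sqrt_of_sq_le ?_⟩
  calc ‖((hf₂ k).eval j).toLp‖ ^ 2 ≤ ∑ i, ‖((hf₂ k).eval i).toLp‖ ^ 2 :=
        Finset.single_le_sum (f := fun i => ‖((hf₂ k).eval i).toLp‖ ^ 2)
          (fun i _ => sq_nonneg _) (Finset.mem_univ j)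
    _ ≤ M := (hf₂ k).integral_dotProduct_self ▸ hM k

end BoundedInL2

namespace TendstoWeaklyInL2

variable {f : ℕ → α → ι → ℝ} {g : α → ι → ℝ}

theorem transpose_mulVec {κ : Type*} [Fintype κ] (h : TendstoWeaklyInL2 μ f g)
    {A : α → Matrix ι κ ℝ} (hA : ∀ i j, MemLp (fun t => A t i j) ∞ μ) :
    TendstoWeaklyInL2 μ (fun k t => (A t)ᵀ *ᵥ f k t) fun t => (A t)ᵀ *ᵥ g t := fun v hv => by
  simpa only [mulVec_transpose, ← dotProduct_mulVec] using h _ (hv.mulVec hA)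

theorem tendsto_integral_mul_eval (h : TendstoWeaklyInL2 μ f g) (j : ι) {c : α → ℝ}
    (hc : MemLp c 2 μ) :
    Tendsto (fun k => ∫ t, f k t j * c t ∂μ) atTop (𝓝 (∫ t, g t j * c t ∂μ)) := by
  classical
  have hv : MemLp (fun t => Pi.single j (c t) : α → ι → ℝ) 2 μ :=
    (ContinuousLinearMap.single ℝ (fun _ : ι => ℝ) j).comp_memLp' hc
  simpa only [dotProduct_single] using h _ hv

theorem of_eval (hf : ∀ k, MemLp (f k) 2 μ) (hg : MemLp g 2 μ)
    (h : ∀ j c, MemLp c 2 μ →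
      Tendsto (fun k => ∫ t, f k t j * c t ∂μ) atTop (𝓝 (∫ t, g t j * c t ∂μ))) :
    TendstoWeaklyInL2 μ f g := fun v hv => by
  have hsplit : ∀ {w : α → ι → ℝ}, MemLp w 2 μ →
      ∫ t, w t ⬝ᵥ v t ∂μ = ∑ j, ∫ t, w t j * v t j ∂μ := fun hw =>
    integral_finsetSum _ fun j _ => (hw.eval j).integrable_fun_mul (hv.eval j)
  simp only [hsplit (hf _), hsplit hg]
  exact tendsto_finsetSum _ fun j _ => h j _ (hv.eval j)

theorem boundedInL2 (h : TendstoWeaklyInL2 μ f g) (hf : ∀ k, MemLp (f k) 2 μ) :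
    BoundedInL2 μ f := by
  choose M hM using fun j => exists_norm_le_of_forall_tendsto_inner
    (Z := fun k => ((hf k).eval j).toLp) fun V =>
    ⟨_, by simpa only [MemLp.inner_toLp_eq_integral_mul] using
      h.tendsto_integral_mul_eval j (Lp.memLp V)⟩
  refine ⟨∑ j, M j ^ 2, fun k => ?_⟩
  rw [(hf k).integral_dotProduct_self]
  exact Finset.sum_le_sum fun j _ => pow_le_pow_left₀ (norm_nonneg _) (hM j k) 2

theorem tendsto_integral [IsFiniteMeasure μ] (h : TendstoWeaklyInL2 μ f g)
    (hf : ∀ k, Integrable (f k) μ) (hg : Integrable g μ) :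
    Tendsto (fun k => ∫ t, f k t ∂μ) atTop (𝓝 (∫ t, g t ∂μ)) := by
  classical
  refine tendsto_pi_nhds.mpr fun j => ?_
  simpa only [eval_integral (hf _).eval, eval_integral hg.eval, dotProduct_single, mul_one] using
    h _ (memLp_const (Pi.single j 1 : ι → ℝ))

end TendstoWeaklyInL2

end VectorL2

theorem ContinuousOn.memLp_top_restrict {E : Type*} [NormedAddCommGroup E] {μ : Measure ℝ}
    {f : ℝ → E} {K : Set ℝ} (hK : IsCompact K) (hf : ContinuousOn f K) :
    MemLp f ∞ (μ.restrict K) := by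
  obtain ⟨C, hC⟩ := hK.exists_bound_of_continuousOn hf
  exact memLp_top_of_bound (hf.aestronglyMeasurable hK.measurableSet) C
    ((ae_restrict_iff' hK.measurableSet).mpr (ae_of_all _ hC))

section Interval

variable {a b : ℝ}

local notation "μ" => volume.restrict (Icc a b)

theorem intervalIntegral_eq_integral_restrict_Icc {E : Type*} [NormedAddCommGroup E]
    [NormedSpace ℝ E] (hab : a ≤ b) (f : ℝ → E) : ∫ x in a..b, f x = ∫ x, f x ∂μ := by
  rw [intervalIntegral.integral_of_le hab, integral_Icc_eq_integral_Ioc]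

theorem MeasureTheory.MemLp.intervalIntegrable {E : Type*} [NormedAddCommGroup E] {f : ℝ → E}
    (hf : MemLp f 2 μ) {x : ℝ} (hx : x ∈ Icc a b) : IntervalIntegrable f volume a x := by
  have hsub : uIcc a x ⊆ Icc a b := by
    rw [uIcc_of_le hx.1]
    exact Icc_subset_Icc_right hx.2
  exact (IntegrableOn.mono_set (hf.integrable one_le_two) hsub).intervalIntegrable

theorem IntervalIntegrable.continuousOn_primitive_Icc {f : ℝ → ℝ} (hab : a ≤ b)
    (hf : IntervalIntegrable f volume a b) :
    ContinuousOn (fun x => ∫ t in a..x, f t) (Icc a b) := by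
  simpa [uIcc_of_le hab] using intervalIntegral.continuousOn_primitive_interval' hf left_mem_uIcc

theorem IntervalIntegrable.memLp_primitive {f : ℝ → ℝ} (hab : a ≤ b)
    (hf : IntervalIntegrable f volume a b) (p : ℝ≥0∞) :
    MemLp (fun x => ∫ t in a..x, f t) p μ :=
  ((hf.continuousOn_primitive_Icc hab).memLp_top_restrict isCompact_Icc).mono_exponent le_top

theorem IntervalIntegrable.integral_primitive_mul_add_mul_primitive {f c : ℝ → ℝ}
    (hf : IntervalIntegrable f volume a b) (hc : IntervalIntegrable c volume a b) :
    ∫ x in a..b, ((∫ t in a..x, f t) * c x + f x * ∫ t in a..x, c t) =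
      (∫ x in a..b, f x) * ∫ x in a..b, c x := by
  have hF := hf.absolutelyContinuousOnInterval_intervalIntegral left_mem_uIcc
  have hC := hc.absolutelyContinuousOnInterval_intervalIntegral left_mem_uIcc
  rw [← sub_zero ((∫ x in a..b, f x) * _), ← zero_mul (∫ x in a..a, c x),
    ← intervalIntegral.integral_same (a := a) (f := f), ← hF.integral_deriv_mul_eq_sub hC]
  refine intervalIntegral.integral_congr_ae ?_
  filter_upwards [hf.ae_hasDerivAt_integral, hc.ae_hasDerivAt_integral] with x hfx hcx hx
  have hx' := uIoc_subset_uIcc hx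
  rw [(hfx hx' a left_mem_uIcc).deriv, (hcx hx' a left_mem_uIcc).deriv]
  ring

theorem IntervalIntegrable.ae_eq_zero_of_primitive_eq_zero {f : ℝ → ℝ} (hab : a ≤ b)
    (hf : IntervalIntegrable f volume a b) (h : ∀ x ∈ Icc a b, ∫ t in a..x, f t = 0) :
    f =ᵐ[μ] 0 := by
  rw [Filter.EventuallyEq, ← Measure.restrict_congr_set Ioo_ae_eq_Icc,
    ae_restrict_iff' measurableSet_Ioo]
  filter_upwards [hf.ae_hasDerivAt_integral] with x hx hxI
  rw [uIcc_of_le hab] at hx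
  have hzero : (fun y => ∫ t in a..y, f t) =ᶠ[𝓝 x] fun _ => 0 :=
    eventually_of_mem (Ioo_mem_nhds hxI.1 hxI.2) fun y hy => h y (Ioo_subset_Icc_self hy)
  exact ((hx (Ioo_subset_Icc_self hxI) a (left_mem_Icc.mpr hab)).congr_of_eventuallyEq
    hzero.symm).unique (hasDerivAt_const x 0)

theorem integral_mul_primitive_eq_neg_integral_mul {y ζ c : ℝ → ℝ} (hab : a ≤ b)
    (hζ : Integrable ζ μ) (hc : Integrable c μ)
    (hy : ∀ x ∈ Icc a b, y x = y a + ∫ t in a..x, ζ t) (hc0 : ∫ x, c x ∂μ = 0) :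
    ∫ x, ζ x * (∫ t in a..x, c t) ∂μ = -∫ x, y x * c x ∂μ := by
  simp only [← intervalIntegral_eq_integral_restrict_Icc hab] at hc0 ⊢
  have hζ' := (intervalIntegrable_iff_integrableOn_Icc_of_le hab).mpr hζ
  have hc' := (intervalIntegrable_iff_integrableOn_Icc_of_le hab).mpr hc
  have hPζ : IntervalIntegrable (fun x => (∫ t in a..x, ζ t) * c x) volume a b :=
    hc'.continuousOn_mul (intervalIntegral.continuousOn_primitive_interval' hζ' left_mem_uIcc)
  have hPc : IntervalIntegrable (fun x => ζ x * ∫ t in a..x, c t) volume a b :=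
    hζ'.mul_continuousOn (intervalIntegral.continuousOn_primitive_interval' hc' left_mem_uIcc)
  have hibp := hζ'.integral_primitive_mul_add_mul_primitive hc'
  rw [intervalIntegral.integral_add hPζ hPc, hc0, mul_zero] at hibp
  have hyc : ∫ x in a..b, y x * c x =
      y a * (∫ x in a..b, c x) + ∫ x in a..b, (∫ t in a..x, ζ t) * c x := by
    rw [← intervalIntegral.integral_const_mul,
      ← intervalIntegral.integral_add (hc'.const_mul _) hPζ]
    refine intervalIntegral.integral_congr fun x hx => ?_
    rw [uIcc_of_le hab] at hx
    simp only [hy x hx]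
    ring
  rw [hyc, hc0]
  linarith

theorem exists_ae_eq_const_add_primitive {Z y : ℝ → ℝ} (hab : a ≤ b) (hZ : MemLp Z 2 μ)
    (hy : MemLp y 2 μ)
    (h : ∀ c, MemLp c 2 μ → ∫ x, c x ∂μ = 0 →
      ∫ x, Z x * (∫ t in a..x, c t) ∂μ = -∫ x, y x * c x ∂μ) :
    ∃ C, ∀ᵐ x ∂μ, y x = C + ∫ t in a..x, Z t := by
  have hP := (hZ.intervalIntegrable (right_mem_Icc.mpr hab)).memLp_primitive hab 2
  obtain ⟨C, hC⟩ := ae_eq_const_of_forall_integral_mul_eq_zero (hP.sub hy) fun c hc hc0 => by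
    have hZc := integral_mul_primitive_eq_neg_integral_mul (y := fun x => ∫ t in a..x, Z t) hab
      (hZ.integrable one_le_two) (hc.integrable one_le_two) (fun x _ => by simp) hc0
    rw [h c hc hc0, neg_inj] at hZc
    simp only [Pi.sub_apply, sub_mul]
    rw [integral_sub (hP.integrable_fun_mul hc) (hy.integrable_fun_mul hc), hZc, sub_self]
  exact ⟨-C, by filter_upwards [hC] with x hx; simp only [Pi.sub_apply] at hx; linarith⟩

def meanZeroPrimitives (a b : ℝ) : Set (Lp ℝ 2 (volume.restrict (Icc a b))) :=
  {V | ∃ c : ℝ → ℝ, MemLp c 2 (volume.restrict (Icc a b)) ∧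
    ∫ x, c x ∂volume.restrict (Icc a b) = 0 ∧
    V =ᵐ[volume.restrict (Icc a b)] fun x => ∫ t in a..x, c t}

theorem dense_span_meanZeroPrimitives (hab : a < b) :
    Dense (Submodule.span ℝ (meanZeroPrimitives a b) : Set (Lp ℝ 2 μ)) := by
  rw [Submodule.dense_iff_topologicalClosure_eq_top, Submodule.topologicalClosure_eq_top_iff,
    Submodule.eq_bot_iff]
  intro f hf
  have hb : b ∈ Icc a b := right_mem_Icc.mpr hab.le
  obtain ⟨C, hC⟩ := exists_ae_eq_const_add_primitive hab.le (Lp.memLp f) (memLp_const 0)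
    fun c hc hc0 => by
      have hP := (hc.intervalIntegrable hb).memLp_primitive hab.le 2
      have h0 := Submodule.inner_right_of_mem_orthogonal (Submodule.subset_span
        (show hP.toLp _ ∈ meanZeroPrimitives a b from ⟨c, hc, hc0, hP.coeFn_toLp⟩)) hf
      rw [hP.inner_toLp_eq_integral_mul] at h0
      simpa [mul_comm] using h0
  have hfi := (Lp.memLp f).intervalIntegrable hb
  have hEq := Measure.eqOn_Icc_of_ae_eq volume hab.ne (g := fun _ => -C)
    (by filter_upwards [hC] with x hx; linarith) (hfi.continuousOn_primitive_Icc hab.le)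
    continuousOn_const
  have hC0 : C = 0 := by simpa using hEq (left_mem_Icc.mpr hab.le)
  rw [Lp.eq_zero_iff_ae_eq_zero]
  exact hfi.ae_eq_zero_of_primitive_eq_zero hab.le fun x hx => by simpa [hC0] using hEq hx

theorem exists_weakLimit_of_primitive (hab : a < b) {y ζ : ℕ → ℝ → ℝ} {ylim : ℝ → ℝ}
    (hζ : ∀ k, MemLp (ζ k) 2 μ) {M : ℝ} (hM : ∀ k, ‖(hζ k).toLp (ζ k)‖ ≤ M)
    (hylim : MemLp ylim 2 μ)
    (hy : ∀ c, MemLp c 2 μ →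
      Tendsto (fun k => ∫ x, y k x * c x ∂μ) atTop (𝓝 (∫ x, ylim x * c x ∂μ)))
    (hprim : ∀ k, ∀ x ∈ Icc a b, y k x = y k a + ∫ t in a..x, ζ k t) :
    ∃ ζlim : ℝ → ℝ, MemLp ζlim 2 μ ∧
      (∀ c, MemLp c 2 μ →
        Tendsto (fun k => ∫ x, ζ k x * c x ∂μ) atTop (𝓝 (∫ x, ζlim x * c x ∂μ))) ∧
      ∃ C, ∀ᵐ x ∂μ, ylim x = C + ∫ t in a..x, ζlim t := by
  have hlim : ∀ c, MemLp c 2 μ → ∫ x, c x ∂μ = 0 →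
      Tendsto (fun k => ∫ x, ζ k x * (∫ t in a..x, c t) ∂μ) atTop
        (𝓝 (-∫ x, ylim x * c x ∂μ)) := fun c hc hc0 => by
    simpa only [integral_mul_primitive_eq_neg_integral_mul hab.le ((hζ _).integrable one_le_two)
      (hc.integrable one_le_two) (hprim _) hc0] using (hy c hc).neg
  obtain ⟨Z, hZ⟩ := exists_tendsto_inner_of_dense_span hM (dense_span_meanZeroPrimitives hab) <| by
    rintro V ⟨c, hc, hc0, hV⟩
    refine ⟨_, (hlim c hc hc0).congr fun k => ?_⟩
    rw [MemLp.inner_toLp_eq_integral_mul]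
    exact integral_congr_ae (by filter_upwards [hV] with x hx; rw [hx])
  have hZ' : ∀ c (hc : MemLp c 2 μ), Tendsto (fun k => ∫ x, ζ k x * c x ∂μ) atTop
      (𝓝 (∫ x, Z x * c x ∂μ)) := fun c hc => by
    have := hZ (hc.toLp c)
    rw [real_inner_comm, hc.inner_toLp_eq_integral_mul] at this
    simpa only [MemLp.inner_toLp_toLp, mul_comm (c _)] using this
  refine ⟨Z, Lp.memLp Z, hZ', exists_ae_eq_const_add_primitive hab.le (Lp.memLp Z) hylim
    fun c hc hc0 => tendsto_nhds_unique (hZ' _ ?_) (hlim c hc hc0)⟩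
  exact (hc.intervalIntegrable (right_mem_Icc.mpr hab.le)).memLp_primitive hab.le 2

variable {ι : Type*} [Fintype ι]

theorem eval_intervalIntegral {f : ℝ → ι → ℝ} (hf : IntervalIntegrable f volume a b) (j : ι) :
    (∫ x in a..b, f x) j = ∫ x in a..b, f x j :=
  ((ContinuousLinearMap.proj (R := ℝ) (φ := fun _ : ι => ℝ) j).intervalIntegral_comp_comm hf).symm

theorem exists_tendstoWeaklyInL2_of_primitive (hab : a < b) {y ζ : ℕ → ℝ → ι → ℝ}
    {ylim : ℝ → ι → ℝ} (hζ : ∀ k, MemLp (ζ k) 2 μ) (hbd : BoundedInL2 μ ζ)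
    (hylim : MemLp ylim 2 μ) (hy : TendstoWeaklyInL2 μ y ylim)
    (hprim : ∀ k, ∀ x ∈ Icc a b, y k x = y k a + ∫ t in a..x, ζ k t) :
    ∃ ζlim : ℝ → ι → ℝ, MemLp ζlim 2 μ ∧ TendstoWeaklyInL2 μ ζ ζlim ∧
      ∃ C, ∀ᵐ x ∂μ, ylim x = C + ∫ t in a..x, ζlim t := by
  have hcomp : ∀ j, ∃ ζlim : ℝ → ℝ, MemLp ζlim 2 μ ∧
      (∀ c, MemLp c 2 μ →
        Tendsto (fun k => ∫ x, ζ k x j * c x ∂μ) atTop (𝓝 (∫ x, ζlim x * c x ∂μ))) ∧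
      ∃ C, ∀ᵐ x ∂μ, ylim x j = C + ∫ t in a..x, ζlim t := fun j => by
    obtain ⟨M, hM⟩ := hbd.norm_toLp_eval_le hζ j
    refine exists_weakLimit_of_primitive hab (y := fun k x => y k x j) _ hM (hylim.eval j)
      (fun c hc => hy.tendsto_integral_mul_eval j hc) fun k x hx => ?_
    rw [hprim k x hx, Pi.add_apply, eval_intervalIntegral ((hζ k).intervalIntegrable hx)]
  choose ζlim hζlim hw C hC using hcomp
  refine ⟨fun x j => ζlim j x, MemLp.of_eval hζlim,
    TendstoWeaklyInL2.of_eval hζ (MemLp.of_eval hζlim) hw, C, ?_⟩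
  filter_upwards [ae_all_iff.mpr hC, ae_restrict_mem measurableSet_Icc] with x hx hxI
  ext j
  rw [Pi.add_apply, eval_intervalIntegral ((MemLp.of_eval hζlim).intervalIntegrable hxI)]
  exact hx j

theorem tendsto_apply_left_of_tendsto_apply_right (hab : a ≤ b) {y ζ : ℕ → ℝ → ι → ℝ}
    {ζlim : ℝ → ι → ℝ} {p q : ι → ℝ} (hζ : ∀ k, MemLp (ζ k) 2 μ) (hζlim : MemLp ζlim 2 μ)
    (hw : TendstoWeaklyInL2 μ ζ ζlim) (hy : ∀ k, y k b = y k a + ∫ x in a..b, ζ k x)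
    (hq : q = p + ∫ x in a..b, ζlim x) (hb : Tendsto (fun k => y k b) atTop (𝓝 q)) :
    Tendsto (fun k => y k a) atTop (𝓝 p) := by
  have hint := hw.tendsto_integral (fun k => (hζ k).integrable one_le_two)
    (hζlim.integrable one_le_two)
  simp only [← intervalIntegral_eq_integral_restrict_Icc hab] at hint
  simpa only [hy, hq, add_sub_cancel_right] using hb.sub hint

end Interval

theorem stmt17_general {m n p : ℕ} (t₀ T : ℝ) (hT : t₀ < T)
    (F : Matrix (Fin m) (Fin n) ℝ)
    (C : ℝ → Matrix (Fin m) (Fin n) ℝ) (H : ℝ → Matrix (Fin p) (Fin n) ℝ)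
    (hC : ContinuousOn C (Set.Icc t₀ T)) (hH : ContinuousOn H (Set.Icc t₀ T))
    (u : ℕ → ℝ → Fin p → ℝ) (z : ℕ → ℝ → Fin m → ℝ) (ζ : ℕ → ℝ → Fin n → ℝ)
    (ulim : ℝ → Fin p → ℝ) (zlim : ℝ → Fin m → ℝ)
    (huL : ∀ k, MemLp (u k) 2 (volume.restrict (Set.Icc t₀ T)))
    (hzL : ∀ k, MemLp (z k) 2 (volume.restrict (Set.Icc t₀ T)))
    (hζL : ∀ k, MemLp (ζ k) 2 (volume.restrict (Set.Icc t₀ T)))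
    (hzlimL : MemLp zlim 2 (volume.restrict (Set.Icc t₀ T)))
    (huw : ∀ v : ℝ → Fin p → ℝ, MemLp v 2 (volume.restrict (Set.Icc t₀ T)) →
      Tendsto (fun k => ∫ t in t₀..T, u k t ⬝ᵥ v t) atTop (𝓝 (∫ t in t₀..T, ulim t ⬝ᵥ v t)))
    (hzw : ∀ v : ℝ → Fin m → ℝ, MemLp v 2 (volume.restrict (Set.Icc t₀ T)) →
      Tendsto (fun k => ∫ t in t₀..T, z k t ⬝ᵥ v t) atTop (𝓝 (∫ t in t₀..T, zlim t ⬝ᵥ v t)))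
    (hAC : ∀ k, ∀ t ∈ Set.Icc t₀ T,
      Fᵀ.mulVec (z k t) = Fᵀ.mulVec (z k t₀) + ∫ s in t₀..t, ζ k s)
    (hbdd : ∃ K : ℝ, ∀ k,
      (∫ t in t₀..T, (ζ k t + (C t)ᵀ.mulVec (z k t) - (H t)ᵀ.mulVec (u k t)) ⬝ᵥ
          (ζ k t + (C t)ᵀ.mulVec (z k t) - (H t)ᵀ.mulVec (u k t))) ≤ K) :
    ∃ (φ : ℝ → Fin n → ℝ) (ζlim : ℝ → Fin n → ℝ),
      MemLp ζlim 2 (volume.restrict (Set.Icc t₀ T)) ∧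
      (∀ t ∈ Set.Icc t₀ T, φ t = φ t₀ + ∫ s in t₀..t, ζlim s) ∧
      (∀ᵐ t ∂(volume.restrict (Set.Icc t₀ T)), φ t = Fᵀ.mulVec (zlim t)) ∧
      (∀ v : ℝ → Fin n → ℝ, MemLp v 2 (volume.restrict (Set.Icc t₀ T)) →
        Tendsto (fun k => ∫ t in t₀..T, ζ k t ⬝ᵥ v t) atTop
          (𝓝 (∫ t in t₀..T, ζlim t ⬝ᵥ v t))) ∧
      (Tendsto (fun k => Fᵀ.mulVec (z k T)) atTop (𝓝 (φ T)) →
        Tendsto (fun k => Fᵀ.mulVec (z k t₀)) atTop (𝓝 (φ t₀))) := by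
  simp only [intervalIntegral_eq_integral_restrict_Icc hT.le] at huw hzw hbdd ⊢
  have hentries : ∀ {r : ℕ} {A : ℝ → Matrix (Fin r) (Fin n) ℝ}, ContinuousOn A (Icc t₀ T) →
      ∀ i j, MemLp (fun t => A t i j) ∞ (volume.restrict (Icc t₀ T)) := fun _ _ _ =>
    ContinuousOn.memLp_top_restrict isCompact_Icc (by fun_prop)
  have hCz₂ := fun k => MemLp.mulVec (A := fun t => (C t)ᵀ) (fun i j => hentries hC j i) (hzL k)
  have hHu₂ := fun k => MemLp.mulVec (A := fun t => (H t)ᵀ) (fun i j => hentries hH j i) (huL k)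
  have hζbd : BoundedInL2 (volume.restrict (Icc t₀ T)) ζ := by
    convert BoundedInL2.sub_add hbdd
      ((TendstoWeaklyInL2.transpose_mulVec hzw (hentries hC)).boundedInL2 hCz₂)
      ((TendstoWeaklyInL2.transpose_mulVec huw (hentries hH)).boundedInL2 hHu₂)
      (fun k => ((hζL k).add (hCz₂ k)).sub (hHu₂ k)) hCz₂ hHu₂ using 1
    funext k t
    abel
  have hF := hentries (A := fun _ => F) continuousOn_const
  obtain ⟨ζlim, hζlim, hw, c, hc⟩ := exists_tendstoWeaklyInL2_of_primitive hT hζL hζbd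
    (hzlimL.mulVec (A := fun _ => Fᵀ) fun i j => hF j i)
    (TendstoWeaklyInL2.transpose_mulVec hzw hF) hAC
  refine ⟨fun t => c + ∫ s in t₀..t, ζlim s, ζlim, hζlim, fun t _ => by simp,
    hc.mono fun t ht => ht.symm, hw, ?_⟩
  exact tendsto_apply_left_of_tendsto_apply_right (y := fun k t => Fᵀ *ᵥ z k t) hT.le hζL hζlim
    hw (fun k => hAC k T (right_mem_Icc.mpr hT.le)) (by simp)

/-- weak closedness of the constraint. If `u_k ⇀ u`, `z_k ⇀ z` weakly in
`L²(t₀,T)`, each `F'z_k` is absolutely continuous with `L²` derivative `ζ_k`, and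
`sup_k ‖ζ_k + C'z_k − H'u_k‖_{L²} < ∞`, then `F'z` is (a.e. equal to) an absolutely
continuous function `φ` with `L²` derivative `ζ`, the derivatives converge weakly
`ζ_k ⇀ ζ`, and `F'z_k(t₀) → φ(t₀)` provided `F'z_k(T) → φ(T)`. -/
theorem stmt17 {m n p : ℕ} (t₀ T : ℝ) (hT : t₀ < T)
    (F : Matrix (Fin m) (Fin n) ℝ)
    (C : ℝ → Matrix (Fin m) (Fin n) ℝ) (H : ℝ → Matrix (Fin p) (Fin n) ℝ)
    (hC : ContinuousOn C (Set.Icc t₀ T)) (hH : ContinuousOn H (Set.Icc t₀ T))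
    (u : ℕ → ℝ → Fin p → ℝ) (z : ℕ → ℝ → Fin m → ℝ) (ζ : ℕ → ℝ → Fin n → ℝ)
    (ulim : ℝ → Fin p → ℝ) (zlim : ℝ → Fin m → ℝ)
    (huL : ∀ k, MemLp (u k) 2 (volume.restrict (Set.Icc t₀ T)))
    (hzL : ∀ k, MemLp (z k) 2 (volume.restrict (Set.Icc t₀ T)))
    (hζL : ∀ k, MemLp (ζ k) 2 (volume.restrict (Set.Icc t₀ T)))
    (hulimL : MemLp ulim 2 (volume.restrict (Set.Icc t₀ T)))
    (hzlimL : MemLp zlim 2 (volume.restrict (Set.Icc t₀ T)))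
    (huw : ∀ v : ℝ → Fin p → ℝ, MemLp v 2 (volume.restrict (Set.Icc t₀ T)) →
      Tendsto (fun k => ∫ t in t₀..T, u k t ⬝ᵥ v t) atTop (𝓝 (∫ t in t₀..T, ulim t ⬝ᵥ v t)))
    (hzw : ∀ v : ℝ → Fin m → ℝ, MemLp v 2 (volume.restrict (Set.Icc t₀ T)) →
      Tendsto (fun k => ∫ t in t₀..T, z k t ⬝ᵥ v t) atTop (𝓝 (∫ t in t₀..T, zlim t ⬝ᵥ v t)))
    (hAC : ∀ k, ∀ t ∈ Set.Icc t₀ T,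
      Fᵀ.mulVec (z k t) = Fᵀ.mulVec (z k t₀) + ∫ s in t₀..t, ζ k s)
    (hbdd : ∃ K : ℝ, ∀ k,
      (∫ t in t₀..T, (ζ k t + (C t)ᵀ.mulVec (z k t) - (H t)ᵀ.mulVec (u k t)) ⬝ᵥ
          (ζ k t + (C t)ᵀ.mulVec (z k t) - (H t)ᵀ.mulVec (u k t))) ≤ K) :
    ∃ (φ : ℝ → Fin n → ℝ) (ζlim : ℝ → Fin n → ℝ),
      MemLp ζlim 2 (volume.restrict (Set.Icc t₀ T)) ∧
      (∀ t ∈ Set.Icc t₀ T, φ t = φ t₀ + ∫ s in t₀..t, ζlim s) ∧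
      (∀ᵐ t ∂(volume.restrict (Set.Icc t₀ T)), φ t = Fᵀ.mulVec (zlim t)) ∧
      (∀ v : ℝ → Fin n → ℝ, MemLp v 2 (volume.restrict (Set.Icc t₀ T)) →
        Tendsto (fun k => ∫ t in t₀..T, ζ k t ⬝ᵥ v t) atTop
          (𝓝 (∫ t in t₀..T, ζlim t ⬝ᵥ v t))) ∧
      (Tendsto (fun k => Fᵀ.mulVec (z k T)) atTop (𝓝 (φ T)) →
        Tendsto (fun k => Fᵀ.mulVec (z k t₀)) atTop (𝓝 (φ t₀))) :=
  stmt17_general t₀ T hT F C H hC hH u z ζ ulim zlim huL hzL hζL hzlimL huw hzw hAC hbdd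
end
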